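/- arXiv:2504.09770 — 4 statements merged into one kernel-verified Lean document; each statement's English description precedes it below -/
import Mathlib

section
/- In the Eisenstein integers ℤ[ω], if n is a positive integer that is a product of the prime 3 (to an even power) and rational primes congruent to 2 mod 3, i.e., n = 3^{2b₀}·∏ pᵢ^{bᵢ} with each pᵢ ≡ 2 (mod 3), then the number of Eisenstein integers of norm n² equals exactly 6 (the associates of n). -/
set_option maxHeartbeats 1000000

/-- The primitive cube root of unity `ω = e^{2πi/3}`. -/
noncomputable def eisensteinOmega : ℂ := Complex.exp (2 * Real.pi * Complex.I / 3)

/-- The ring of Eisenstein integers `ℤ[ω]`, as a subring of `ℂ`. -/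
noncomputable def EisensteinInt : Subalgebra ℤ ℂ := Algebra.adjoin ℤ {eisensteinOmega}


lemma eisOmega_eq : eisensteinOmega = Complex.exp ((2*Real.pi/3 : ℝ) * Complex.I) := by
  unfold eisensteinOmega; push_cast; ring_nf

lemma eisOmega_re : eisensteinOmega.re = -(1/2) := by
  rw [eisOmega_eq, Complex.exp_ofReal_mul_I_re]
  have : (2*Real.pi/3) = Real.pi - Real.pi/3 := by ring
  rw [this, Real.cos_pi_sub, Real.cos_pi_div_three]

lemma eisOmega_im : eisensteinOmega.im = Real.sqrt 3 / 2 := by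
  rw [eisOmega_eq, Complex.exp_ofReal_mul_I_im]
  have : (2*Real.pi/3) = Real.pi - Real.pi/3 := by ring
  rw [this, Real.sin_pi_sub, Real.sin_pi_div_three]

lemma eisOmega_sq : eisensteinOmega^2 + eisensteinOmega + 1 = 0 := by
  have h3 : eisensteinOmega^3 = 1 := by
    unfold eisensteinOmega
    rw [← Complex.exp_nat_mul]
    rw [show (3:ℕ) * (2 * Real.pi * Complex.I / 3) = 2 * Real.pi * Complex.I by push_cast; ring]
    exact Complex.exp_two_pi_mul_I
  have h1 : eisensteinOmega ≠ 1 := by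
    intro h
    have := eisOmega_im
    rw [h] at this
    simp at this
    have := Real.sqrt_pos.mpr (by norm_num : (0:ℝ) < 3)
    linarith
  have : (eisensteinOmega - 1) * (eisensteinOmega^2 + eisensteinOmega + 1) = 0 := by
    linear_combination h3
  rcases mul_eq_zero.mp this with h | h
  · exact absurd (sub_eq_zero.mp h) h1
  · exact h

lemma mem_eis_iff (z : ℂ) : z ∈ EisensteinInt ↔ ∃ a b : ℤ, z = a + b * eisensteinOmega := by
  constructor
  · intro hz
    induction hz using Algebra.adjoin_induction with
    | mem x hx => exact ⟨0, 1, by simp at hx; simp [hx]⟩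
    | algebraMap r => exact ⟨r, 0, by simp⟩
    | add x y hx hy ihx ihy =>
      obtain ⟨a, b, rfl⟩ := ihx; obtain ⟨c, d, rfl⟩ := ihy
      exact ⟨a + c, b + d, by push_cast; ring⟩
    | mul x y hx hy ihx ihy =>
      obtain ⟨a, b, rfl⟩ := ihx; obtain ⟨c, d, rfl⟩ := ihy
      refine ⟨a*c - b*d, a*d + b*c - b*d, ?_⟩
      have h2 : eisensteinOmega^2 = -1 - eisensteinOmega := by linear_combination eisOmega_sq
      push_cast
      linear_combination ((b:ℂ)*d) * h2
  · rintro ⟨a, b, rfl⟩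
    exact add_mem (intCast_mem _ a) (mul_mem (intCast_mem _ b)
      (Algebra.subset_adjoin (Set.mem_singleton _)))

lemma normSq_eis (a b : ℤ) :
    Complex.normSq ((a:ℂ) + b * eisensteinOmega) = ((a^2 - a*b + b^2 : ℤ) : ℝ) := by
  have h3 : Real.sqrt 3 ^ 2 = 3 := Real.sq_sqrt (by norm_num)
  rw [Complex.normSq_apply]
  simp [Complex.add_re, Complex.add_im, Complex.mul_re, Complex.mul_im,
    eisOmega_re, eisOmega_im]
  push_cast
  nlinarith [h3]

lemma eis_inj : Function.Injective (fun p : ℤ × ℤ => (p.1 : ℂ) + p.2 * eisensteinOmega) := by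
  rintro ⟨a, b⟩ ⟨c, d⟩ h
  simp only at h
  have hs : Real.sqrt 3 ≠ 0 := by positivity
  have him := congrArg Complex.im h
  have hre := congrArg Complex.re h
  simp only [Complex.add_im, Complex.mul_im, Complex.add_re, Complex.mul_re,
    eisOmega_re, eisOmega_im, Complex.intCast_re, Complex.intCast_im] at him hre
  have hbd : (b:ℝ) = d := by
    have h3 : (0:ℝ) < Real.sqrt 3 := by positivity
    nlinarith [him]
  have : b = d := by exact_mod_cast hbd
  subst this
  have : (a:ℝ) = c := by linarith
  have : a = c := by exact_mod_cast this
  simp [this]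

lemma zmod_claim (q : ℕ) (hq : q.Prime) (hq2 : q % 3 = 2) (x y : ZMod q)
    (h : x^2 - x*y + y^2 = 0) : x = 0 ∧ y = 0 := by
  haveI : Fact q.Prime := ⟨hq⟩
  by_cases hq2' : q = 2
  · subst hq2'; revert h; revert x y; decide
  have hodd : (2 : ZMod q) ≠ 0 := by
    intro h2
    have hd := (ZMod.natCast_eq_zero_iff 2 q).mp (by exact_mod_cast h2)
    exact hq2' ((Nat.prime_dvd_prime_iff_eq hq Nat.prime_two).mp hd)
  have hy : y = 0 := by
    by_contra hy0
    -- u^2 = -3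
    set u : ZMod q := (2*x - y) * y⁻¹ with hu
    have hu2 : u^2 = -3 := by
      have hyinv : y * y⁻¹ = 1 := ZMod.mul_inv_of_unit y (Ne.isUnit hy0)
      have key : (2*x - y)^2 = -3 * y^2 := by linear_combination 4 * h
      calc u^2 = ((2*x-y)^2) * (y⁻¹)^2 := by ring
        _ = (-3 * y^2) * (y⁻¹)^2 := by rw [key]
        _ = -3 * (y * y⁻¹)^2 := by ring
        _ = -3 := by rw [hyinv]; ring
    set z : ZMod q := (u - 1) * 2⁻¹ with hz
    have h2inv : (2 : ZMod q) * 2⁻¹ = 1 := ZMod.mul_inv_of_unit 2 (Ne.isUnit hodd)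
    have e : (2:ZMod q) * z = u - 1 := by
      rw [hz, mul_comm (u-1), ← mul_assoc, h2inv, one_mul]
    have hz1 : z^2 + z + 1 = 0 := by
      have key2 : (4:ZMod q)*(z^2+z+1) = u^2+3 := by linear_combination (2*z+u+1) * e
      rw [hu2] at key2
      norm_num at key2
      have h4 : ((4:ZMod q)) ≠ 0 := by
        have : ((2:ZMod q))^2 ≠ 0 := pow_ne_zero _ hodd
        intro h0; apply this; rw [show ((2:ZMod q))^2 = 4 by norm_num, h0]
      rcases key2 with h | h
      · exact absurd h h4
      · exact h
    have hz3 : z^3 = 1 := by linear_combination (z - 1) * hz1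
    have hzne1 : z ≠ 1 := by
      intro h1
      rw [h1] at hz1
      have h3 : (3 : ZMod q) = 0 := by linear_combination hz1
      have := (ZMod.natCast_eq_zero_iff 3 q).mp (by exact_mod_cast h3)
      have := (Nat.prime_dvd_prime_iff_eq hq (by norm_num)).mp this
      omega
    have hord : orderOf z = 3 := orderOf_eq_prime hz3 hzne1
    have hzne0 : z ≠ 0 := by
      intro h0; rw [h0] at hz3; simp at hz3
    have hfer : z ^ (q - 1) = 1 := ZMod.pow_card_sub_one_eq_one hzne0
    have hdvd : 3 ∣ q - 1 := hord ▸ orderOf_dvd_of_pow_eq_one hfer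
    have hq1 : 2 ≤ q := hq.two_le
    omega
  subst hy
  simp only [mul_zero, sub_zero, add_zero] at h
  have : x^2 = 0 := by simpa using h
  exact ⟨sq_eq_zero_iff.mp this, rfl⟩

lemma eis_dvd_of_dvd (q : ℕ) (hq : q.Prime) (hq2 : q % 3 = 2) (a b : ℤ)
    (h : (q:ℤ) ∣ a^2 - a*b + b^2) : (q:ℤ) ∣ a ∧ (q:ℤ) ∣ b := by
  have h0 : ((a^2 - a*b + b^2 : ℤ) : ZMod q) = 0 :=
    (ZMod.intCast_zmod_eq_zero_iff_dvd _ _).mpr h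
  push_cast at h0
  obtain ⟨ha, hb⟩ := zmod_claim q hq hq2 (a : ZMod q) (b : ZMod q) h0
  exact ⟨(ZMod.intCast_zmod_eq_zero_iff_dvd _ _).mp ha,
    (ZMod.intCast_zmod_eq_zero_iff_dvd _ _).mp hb⟩

lemma eis_not_nine (a b : ℤ) (hco : Int.gcd a b = 1) (h : (9:ℤ) ∣ a^2 - a*b + b^2) : False := by
  have h9 : ∀ x y : ZMod 9, x^2 - x*y + y^2 = 0 → (3*x = 0 ∧ 3*y = 0) := by decide
  have h0 : ((a^2 - a*b + b^2 : ℤ) : ZMod 9) = 0 := by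
    rw [ZMod.intCast_zmod_eq_zero_iff_dvd]; exact_mod_cast h
  push_cast at h0
  obtain ⟨ha, hb⟩ := h9 (a : ZMod 9) (b : ZMod 9) h0
  have ha' : (9:ℤ) ∣ 3 * a := by
    rw [show ((9:ℤ)) = ((9:ℕ):ℤ) by norm_num, ← ZMod.intCast_zmod_eq_zero_iff_dvd]
    push_cast; exact ha
  have hb' : (9:ℤ) ∣ 3 * b := by
    rw [show ((9:ℤ)) = ((9:ℕ):ℤ) by norm_num, ← ZMod.intCast_zmod_eq_zero_iff_dvd]
    push_cast; exact hb
  have h3a : (3:ℤ) ∣ a := by omega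
  have h3b : (3:ℤ) ∣ b := by omega
  have : (3:ℤ) ∣ Int.gcd a b := Int.dvd_coe_gcd h3a h3b
  rw [hco] at this
  norm_num at this

lemma eis_core (n : ℕ) (hn : 0 < n)
    (hp : ∀ q : ℕ, q.Prime → q ∣ n → q ≠ 3 → q % 3 = 2)
    (a b : ℤ) (h : a^2 - a*b + b^2 = (n:ℤ)^2) :
    (a, b) = ((n:ℤ), 0) ∨ (a, b) = (-(n:ℤ), 0) ∨ (a, b) = (0, (n:ℤ)) ∨
      (a, b) = (0, -(n:ℤ)) ∨ (a, b) = ((n:ℤ), (n:ℤ)) ∨ (a, b) = (-(n:ℤ), -(n:ℤ)) := by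
  have hn0 : (n:ℤ) ≠ 0 := by exact_mod_cast hn.ne'
  have hab : ¬(a = 0 ∧ b = 0) := by
    rintro ⟨rfl, rfl⟩
    simp at h
    exact hn0 (pow_eq_zero_iff (by norm_num) |>.mp h.symm)
  have hgpos : 0 < Int.gcd a b := by
    rcases Nat.eq_zero_or_pos (Int.gcd a b) with h' | h'
    · exact absurd ⟨(Int.gcd_eq_zero_iff.mp h').1, (Int.gcd_eq_zero_iff.mp h').2⟩ hab
    · exact h'
  obtain ⟨a', b', hco, ha, hb⟩ := Int.exists_gcd_one hgpos
  set d : ℕ := Int.gcd a b with hd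
  -- M = a'^2 - a'b' + b'^2
  set M : ℤ := a'^2 - a'*b' + b'^2 with hM
  have hMeq : M * (d:ℤ)^2 = (n:ℤ)^2 := by
    rw [hM]; rw [ha, hb] at h; linear_combination h
  have hMpos : 0 < M := by
    rcases lt_trichotomy M 0 with h' | h' | h'
    · nlinarith [sq_nonneg (d:ℤ), sq_nonneg (n:ℤ), pow_pos (by positivity : (0:ℤ) < (d:ℤ)) 2]
    · rw [h'] at hMeq; simp at hMeq; exact absurd (pow_eq_zero_iff (by norm_num) |>.mp hMeq.symm) hn0
    · exact h'
  set m : ℕ := M.toNat with hm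
  have hMm : (m : ℤ) = M := Int.toNat_of_nonneg hMpos.le
  have hmn : m * d^2 = n^2 := by
    have : ((m * d^2 : ℕ) : ℤ) = ((n^2 : ℕ) : ℤ) := by push_cast; rw [hMm]; exact hMeq
    exact_mod_cast this
  have hm0 : m ≠ 0 := by
    intro h0; rw [h0] at hMm; simp at hMm; omega
  -- all prime divisors of m are 3
  have hall : ∀ {r : ℕ}, r.Prime → r ∣ m → r = 3 := by
    intro r hr hrm
    by_contra hr3
    have hrn : r ∣ n := hr.dvd_of_dvd_pow (hmn ▸ Dvd.dvd.mul_right hrm (d^2) |>.trans dvd_rfl)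
    have hr2 : r % 3 = 2 := hp r hr hrn hr3
    have hrM : (r:ℤ) ∣ M := hMm ▸ Int.natCast_dvd_natCast.mpr hrm
    obtain ⟨hra, hrb⟩ := eis_dvd_of_dvd r hr hr2 a' b' (by rw [← hM]; exact hrM)
    have : (r:ℤ) ∣ Int.gcd a' b' := Int.dvd_coe_gcd hra hrb
    rw [hco] at this
    have : r ∣ 1 := by exact_mod_cast this
    exact hr.one_lt.ne' (Nat.eq_one_of_dvd_one this) |>.elim
  have hmp : m = 3 ^ m.primeFactorsList.length :=
    Nat.eq_prime_pow_of_unique_prime_dvd hm0 hall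
  set k : ℕ := m.primeFactorsList.length with hk
  -- k ≤ 1
  have hk1 : k ≤ 1 := by
    by_contra hk2
    push_neg at hk2
    have h9 : 9 ∣ m := by
      rw [hmp]
      have : 3^2 ∣ 3^k := pow_dvd_pow 3 hk2
      simpa using this
    have h9M : (9:ℤ) ∣ M := by
      rw [← hMm]; exact_mod_cast Int.natCast_dvd_natCast.mpr h9
    exact eis_not_nine a' b' hco (by rw [← hM]; exact h9M)
  -- k even
  have hkeven : Even k := by
    have hd0 : d ≠ 0 := hgpos.ne'
    have h1 : (m * d^2).factorization 3 = (n^2).factorization 3 := by rw [hmn]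
    rw [Nat.factorization_mul hm0 (pow_ne_zero 2 hd0), Nat.factorization_pow] at h1
    have hm3 : m.factorization 3 = k := by
      rw [hmp, Nat.Prime.factorization_pow (by norm_num : Nat.Prime 3)]
      simp
    rw [Nat.factorization_pow] at h1
    simp only [Finsupp.coe_add, Finsupp.coe_smul, Pi.add_apply, Pi.smul_apply,
      smul_eq_mul, hm3] at h1
    rw [Nat.even_iff]
    omega
  have hkzero : k = 0 := by
    rcases hkeven with ⟨j, hj⟩; omega
  have hm1 : m = 1 := by rw [hmp, hkzero]; rfl
  have hM1 : M = 1 := by rw [← hMm, hm1]; rfl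
  have hdn : d = n := by
    have : d^2 = n^2 := by rw [← hmn, hm1, one_mul]
    exact Nat.pow_left_injective (by norm_num) this
  -- solve a'^2 - a'b' + b'^2 = 1
  have hM1' : a'^2 - a'*b' + b'^2 = 1 := by rw [← hM]; exact hM1
  have ha2 : a'^2 ≤ 1 := by nlinarith [sq_nonneg (a' - 2*b'), sq_nonneg b']
  have hb2 : b'^2 ≤ 1 := by nlinarith [sq_nonneg (2*a' - b'), sq_nonneg a']
  have ha1 : -1 ≤ a' ∧ a' ≤ 1 := by constructor <;> nlinarith
  have hb1 : -1 ≤ b' ∧ b' ≤ 1 := by constructor <;> nlinarith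
  have hden : (d:ℤ) = (n:ℤ) := by exact_mod_cast hdn
  rw [ha, hb, hden]
  obtain ⟨ha1l, ha1r⟩ := ha1
  obtain ⟨hb1l, hb1r⟩ := hb1
  clear_value d M m k
  clear hmn hMeq hall hmp hk hk1 hkeven hkzero hm1 hM1 hMm hm0 h hab hM hm hd hgpos hn hp ha hb ha2 hb2
  interval_cases a' <;> interval_cases b' <;> norm_num at hM1' <;> norm_num <;> tauto

/-- If `n = 3^{2b₀}·∏ pᵢ^{bᵢ}` is a positive integer where `3` appears to an even power and
every other prime factor satisfies `pᵢ ≡ 2 (mod 3)`, then there are exactly `6` Eisenstein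
integers of norm `n²` (the associates of `n`). The norm of an Eisenstein integer `z` is the
squared modulus `|z|²`. -/
theorem eisenstein_count_norm_isolated (n : ℕ) (hn : 0 < n)
    (h3 : Even (n.factorization 3))
    (hp : ∀ q : ℕ, q.Prime → q ∣ n → q ≠ 3 → q % 3 = 2) :
    {z : EisensteinInt | Complex.normSq (z : ℂ) = ((n : ℝ)) ^ 2}.ncard = 6 := by
  classical
  set f : ℤ × ℤ → ℂ := fun p => (p.1 : ℂ) + p.2 * eisensteinOmega with hf
  set F : Finset (ℤ × ℤ) :=
    {((n:ℤ), 0), (-(n:ℤ), 0), (0, (n:ℤ)), (0, -(n:ℤ)), ((n:ℤ), (n:ℤ)), (-(n:ℤ), -(n:ℤ))} with hF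
  have hnz : (0:ℤ) < (n:ℤ) := by exact_mod_cast hn
  have key : Subtype.val '' {z : EisensteinInt | Complex.normSq (z : ℂ) = ((n : ℝ)) ^ 2}
      = f '' (F : Set (ℤ × ℤ)) := by
    ext w
    simp only [Set.mem_image, Set.mem_setOf_eq]
    constructor
    · rintro ⟨⟨z, hz⟩, hnorm, rfl⟩
      obtain ⟨a, b, rfl⟩ := (mem_eis_iff z).mp hz
      simp only at hnorm
      rw [normSq_eis] at hnorm
      have hint : a^2 - a*b + b^2 = (n:ℤ)^2 := by exact_mod_cast hnorm
      have hcases := eis_core n hn hp a b hint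
      refine ⟨(a, b), ?_, rfl⟩
      simp only [hF, Finset.coe_insert, Set.mem_insert_iff, Finset.coe_singleton,
        Set.mem_singleton_iff]
      tauto
    · rintro ⟨p, hp', rfl⟩
      refine ⟨⟨f p, (mem_eis_iff _).mpr ⟨p.1, p.2, rfl⟩⟩, ?_, rfl⟩
      have hns : Complex.normSq (f p) = ((p.1^2 - p.1*p.2 + p.2^2 : ℤ) : ℝ) := normSq_eis p.1 p.2
      simp only [hF, Finset.coe_insert, Set.mem_insert_iff, Finset.coe_singleton,
        Set.mem_singleton_iff] at hp'
      rcases hp' with rfl | rfl | rfl | rfl | rfl | rfl <;>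
        · simp only [hns]; push_cast; ring
  have h1 : {z : EisensteinInt | Complex.normSq (z : ℂ) = ((n : ℝ)) ^ 2}.ncard
      = (Subtype.val '' {z : EisensteinInt | Complex.normSq (z : ℂ) = ((n : ℝ)) ^ 2}).ncard :=
    (Set.ncard_image_of_injective _ Subtype.val_injective).symm
  rw [h1, key, Set.ncard_image_of_injective _ eis_inj, Set.ncard_coe_finset]
  rw [hF]
  rw [Finset.card_insert_of_notMem (by simp [Prod.ext_iff]; omega),
      Finset.card_insert_of_notMem (by simp [Prod.ext_iff]; omega),
      Finset.card_insert_of_notMem (by simp [Prod.ext_iff]; omega),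
      Finset.card_insert_of_notMem (by simp [Prod.ext_iff]; omega),
      Finset.card_insert_of_notMem (by simp [Prod.ext_iff]; omega),
      Finset.card_singleton]
end

section
/- In the Gaussian integers ℤ[i], if n = 2^{b₀}·∏ pᵢ^{bᵢ} is a positive integer where each pᵢ is a rational prime with pᵢ ≡ 3 (mod 4), then the number of Gaussian integers of norm n² is exactly 4. -/
lemma dvd_of_three_mod4 {p : ℕ} (hpp : p.Prime) (h3 : p % 4 = 3) (a b : ℤ)
    (h : (p:ℤ) ∣ a^2 + b^2) : (p:ℤ) ∣ a := by
  haveI := Fact.mk hpp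
  by_contra hnd
  have h1 : ((a : ZMod p))^2 + (b: ZMod p)^2 = 0 := by
    have := (ZMod.intCast_zmod_eq_zero_iff_dvd _ p).2 h
    push_cast at this; linear_combination this
  have ha0 : (a : ZMod p) ≠ 0 := fun h0 => hnd ((ZMod.intCast_zmod_eq_zero_iff_dvd _ p).1 h0)
  have hsq : ((b : ZMod p) / a)^2 = -1 := by
    field_simp
    linear_combination h1
  have : IsSquare (-1 : ZMod p) := ⟨(b : ZMod p) / a, by rw [← hsq]; ring⟩
  rw [ZMod.exists_sq_eq_neg_one_iff] at this
  exact this h3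

lemma key_zero (n : ℕ) (hn : 0 < n)
    (hp : ∀ q : ℕ, q.Prime → q ∣ n → q ≠ 2 → q % 4 = 3) :
    ∀ a b : ℤ, a^2 + b^2 = (n:ℤ)^2 → a = 0 ∨ b = 0 := by
  induction n using Nat.strong_induction_on with
  | _ n ih =>
  intro a b hab
  rcases eq_or_lt_of_le (Nat.succ_le_of_lt hn) with h1 | h1
  · -- n = 1
    have : (n:ℤ) = 1 := by omega
    rw [this] at hab
    by_contra hc
    push_neg at hc
    have ha : 1 ≤ |a| := Int.one_le_abs hc.1
    have hb : 1 ≤ |b| := Int.one_le_abs hc.2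
    nlinarith [sq_abs a, sq_abs b]
  · -- n > 1
    set p := n.minFac with hpdef
    have hpp : p.Prime := Nat.minFac_prime (by omega)
    have hpd : p ∣ n := Nat.minFac_dvd n
    obtain ⟨m, hm⟩ := hpd
    have hm0 : 0 < m := Nat.pos_of_ne_zero (fun h => by rw [h, mul_zero] at hm; omega)
    rcases eq_or_ne p 2 with h2 | h2
    · -- p = 2 : a, b both even
      have hab4 : a^2 + b^2 = 4 * (m:ℤ)^2 := by
        rw [hab, hm, h2]; push_cast; ring
      have hae : (2:ℤ) ∣ a ∧ (2:ℤ) ∣ b := by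
        rcases Int.even_or_odd a with ⟨x, hx⟩ | ⟨x, hx⟩ <;>
        rcases Int.even_or_odd b with ⟨y, hy⟩ | ⟨y, hy⟩
        · exact ⟨⟨x, by omega⟩, ⟨y, by omega⟩⟩
        · exfalso; subst hx hy
          have hd : (4:ℤ) ∣ 1 := ⟨(m:ℤ)^2 - x^2 - y^2 - y, by linear_combination hab4⟩
          norm_num at hd
        · exfalso; subst hx hy
          have hd : (4:ℤ) ∣ 1 := ⟨(m:ℤ)^2 - x^2 - x - y^2, by linear_combination hab4⟩
          norm_num at hd
        · exfalso; subst hx hy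
          have hd : (4:ℤ) ∣ 2 := ⟨(m:ℤ)^2 - x^2 - x - y^2 - y, by linear_combination hab4⟩
          norm_num at hd
      obtain ⟨⟨x, hx⟩, ⟨y, hy⟩⟩ := hae
      have hmlt : m < n := by
        have h2le : 2 ≤ p := hpp.two_le
        nlinarith [hm]
      have hrec : x^2 + y^2 = (m:ℤ)^2 := by
        rw [hx, hy] at hab4
        have h4 : 4*(x^2 + y^2) = 4*(m:ℤ)^2 := by linear_combination hab4
        linarith
      have := ih m hmlt hm0
        (fun q hq hqd hq2 => hp q hq (hm ▸ Dvd.dvd.mul_left hqd p) hq2) x y hrec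
      rcases this with h | h
      · left; omega
      · right; omega
    · -- p odd, p % 4 = 3
      have h3 : p % 4 = 3 := hp p hpp (Nat.minFac_dvd n) h2
      have hnpm : ((n:ℤ)) = (p:ℤ) * (m:ℤ) := by rw [hm]; push_cast; ring
      have hdn : (p:ℤ) ∣ a^2 + b^2 := ⟨(p:ℤ)*(m:ℤ)^2, by rw [hab, hnpm]; ring⟩
      have hda : (p:ℤ) ∣ a := dvd_of_three_mod4 hpp h3 a b hdn
      have hdb : (p:ℤ) ∣ b := dvd_of_three_mod4 hpp h3 b a (by
        have : b^2 + a^2 = a^2 + b^2 := by ring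
        rw [this]; exact hdn)
      obtain ⟨x, hx⟩ := hda
      obtain ⟨y, hy⟩ := hdb
      have hp0 : (0:ℤ) < (p:ℤ) := by exact_mod_cast hpp.pos
      have hrec : x^2 + y^2 = (m:ℤ)^2 := by
        rw [hx, hy, hnpm] at hab
        have : (p:ℤ)^2 * (x^2 + y^2) = (p:ℤ)^2 * (m:ℤ)^2 := by linear_combination hab
        have hne : ((p:ℤ)^2) ≠ 0 := by positivity
        exact mul_left_cancel₀ hne this
      have hmlt : m < n := by
        have : 2 ≤ p := hpp.two_le
        nlinarith [hm]
      have := ih m hmlt hm0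
        (fun q hq hqd hq2 => hp q hq (hm ▸ Dvd.dvd.mul_left hqd p) hq2) x y hrec
      rcases this with h | h
      · left; rw [hx, h, mul_zero]
      · right; rw [hy, h, mul_zero]

/-- If `n = 2^{b₀}·∏ pᵢ^{bᵢ}` is a positive integer whose odd prime factors all satisfy
`pᵢ ≡ 3 (mod 4)`, then there are exactly `4` Gaussian integers of norm `n²`. -/
theorem gaussian_count_norm_isolated (n : ℕ) (hn : 0 < n)
    (hp : ∀ q : ℕ, q.Prime → q ∣ n → q ≠ 2 → q % 4 = 3) :
    {z : GaussianInt | Zsqrtd.norm z = (n : ℤ) ^ 2}.ncard = 4 := by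
  have hset : {z : GaussianInt | Zsqrtd.norm z = (n : ℤ) ^ 2} =
      {⟨(n:ℤ), 0⟩, ⟨0, (n:ℤ)⟩, ⟨-(n:ℤ), 0⟩, ⟨0, -(n:ℤ)⟩} := by
    ext z
    simp only [Set.mem_setOf_eq, Set.mem_insert_iff, Set.mem_singleton_iff, Zsqrtd.norm,
      Zsqrtd.ext_iff]
    constructor
    · intro h
      have h' : z.re^2 + z.im^2 = (n:ℤ)^2 := by linear_combination h
      rcases key_zero n hn hp z.re z.im h' with h0 | h0
      · have : (z.im - n) * (z.im + n) = 0 := by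
          rw [h0] at h'; linear_combination h'
        rcases mul_eq_zero.1 this with h | h
        · right; left; constructor <;> omega
        · right; right; right; constructor <;> omega
      · have : (z.re - n) * (z.re + n) = 0 := by
          rw [h0] at h'; linear_combination h'
        rcases mul_eq_zero.1 this with h | h
        · left; constructor <;> omega
        · right; right; left; constructor <;> omega
    · rintro (⟨h1, h2⟩ | ⟨h1, h2⟩ | ⟨h1, h2⟩ | ⟨h1, h2⟩) <;> rw [h1, h2] <;> ring
  rw [hset]
  have hn0 : (n:ℤ) ≠ 0 := by exact_mod_cast hn.ne'
  rw [Set.ncard_insert_of_notMem (by simp [Zsqrtd.ext_iff]; omega),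
    Set.ncard_insert_of_notMem (by simp [Zsqrtd.ext_iff]; omega),
    Set.ncard_insert_of_notMem (by simp [Zsqrtd.ext_iff]; omega),
    Set.ncard_singleton]
end

section
/- Let O be the ring of integers of an imaginary quadratic field which is a UFD. An element α ∈ O has the property that every element of the same norm is an associate of α if and only if no split rational prime divides N(α). -/
set_option synthInstance.maxHeartbeats 400000

section Helpers

open NumberField Ideal

variable (K : Type*) [Field K] [NumberField K]

theorem absNorm_span_nat (hdeg : Module.finrank ℚ K = 2) (m : ℕ) :
    Ideal.absNorm (Ideal.span {(m : 𝓞 K)}) = m ^ 2 := by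
  have b := Module.Free.chooseBasis ℤ (𝓞 K)
  have hcard : Fintype.card (Module.Free.ChooseBasisIndex ℤ (𝓞 K)) = 2 := by
    rw [← Module.finrank_eq_card_chooseBasisIndex, NumberField.RingOfIntegers.rank, hdeg]
  have : ((m : ℤ) : 𝓞 K) = algebraMap ℤ (𝓞 K) (m : ℤ) := rfl
  rw [Ideal.absNorm_span_singleton]
  have h2 : ((m : 𝓞 K) : 𝓞 K) = algebraMap ℤ (𝓞 K) (m : ℤ) := by push_cast; rfl
  rw [h2, Algebra.norm_algebraMap_of_basis b, hcard]
  simp [Int.natAbs_pow]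

theorem exists_prime_over (hdeg : Module.finrank ℚ K = 2) {p : ℕ} (hp : p.Prime)
    (I : Ideal (𝓞 K)) (hI : I ≠ ⊥) (hdvd : p ∣ Ideal.absNorm I) :
    ∃ P : Ideal (𝓞 K), P.IsPrime ∧ I ≤ P ∧ (p : 𝓞 K) ∈ P := by
  have hne : I ⊔ Ideal.span {(p : 𝓞 K)} ≠ ⊤ := by
    intro htop
    have hcop : IsCoprime I (Ideal.span {(p : 𝓞 K)}) := (Ideal.isCoprime_iff_sup_eq).mpr htop
    set n := Ideal.absNorm I with hn
    have hn0 : n ≠ 0 := by simpa [hn, Ideal.absNorm_eq_zero_iff] using hI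
    set k := n.factorization p with hk
    set m := n / p ^ k with hm
    have hmul : p ^ k * m = n := Nat.ordProj_mul_ordCompl_eq_self n p
    have hpm : ¬ p ∣ m := Nat.not_dvd_ordCompl hp hn0
    have hIdvd : I ∣ Ideal.span {(n : 𝓞 K)} :=
      Ideal.dvd_iff_le.mpr ((Ideal.span_singleton_le_iff_mem _).2 (Ideal.absNorm_mem I))
    have hspan : Ideal.span {(n : 𝓞 K)} =
        Ideal.span {(p : 𝓞 K)} ^ k * Ideal.span {(m : 𝓞 K)} := by
      rw [Ideal.span_singleton_pow, Ideal.span_singleton_mul_span_singleton, ← hmul]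
      push_cast
      ring_nf
    have hIm : I ∣ Ideal.span {(m : 𝓞 K)} := by
      refine (hcop.pow_right (n := k)).dvd_of_dvd_mul_left (z := Ideal.span {(m : 𝓞 K)}) ?_
      rwa [← hspan]
    have : n ∣ m ^ 2 := by
      have := Ideal.absNorm_dvd_absNorm_of_le (Ideal.dvd_iff_le.mp hIm)
      rwa [absNorm_span_nat K hdeg] at this
    exact hpm (hp.dvd_of_dvd_pow (hdvd.trans this))
  obtain ⟨P, hPmax, hle⟩ := Ideal.exists_le_maximal _ hne
  refine ⟨P, hPmax.isPrime, le_trans le_sup_left hle, hle ?_⟩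
  exact le_sup_right (α := Ideal (𝓞 K)) (Ideal.subset_span rfl)

theorem unique_prime_over (hdeg : Module.finrank ℚ K = 2) {p : ℕ} (hp : p.Prime)
    (hns : ¬ ∃ P Q : Ideal (𝓞 K), P.IsPrime ∧ Q.IsPrime ∧ P ≠ Q ∧
      Ideal.span {(p : 𝓞 K)} = P * Q)
    {P P' : Ideal (𝓞 K)} (hP : P.IsPrime) (hP' : P'.IsPrime)
    (hmem : (p : 𝓞 K) ∈ P) (hmem' : (p : 𝓞 K) ∈ P') : P = P' := by
  have hp0 : (p : 𝓞 K) ≠ 0 := Nat.cast_ne_zero.mpr hp.ne_zero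
  have hPbot : P ≠ ⊥ := fun h => hp0 (by simpa [h] using hmem)
  have hP'bot : P' ≠ ⊥ := fun h => hp0 (by simpa [h] using hmem')
  set Ip : Ideal (𝓞 K) := Ideal.span {(p : 𝓞 K)} with hIp
  have hIpnorm : Ideal.absNorm Ip = p ^ 2 := absNorm_span_nat K hdeg p
  -- divisors of p^2 that aren't 1 are divisible by p
  have hdiv : ∀ a : ℕ, a ∣ p ^ 2 → a ≠ 1 → p ∣ a := by
    intro a ha h1
    obtain ⟨i, hi, rfl⟩ := (Nat.dvd_prime_pow hp).mp ha
    cases i with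
    | zero => simp at h1
    | succ j => exact dvd_pow_self p (Nat.succ_ne_zero j)
  have hPd : P ∣ Ip := Ideal.dvd_iff_le.mpr ((Ideal.span_singleton_le_iff_mem _).2 hmem)
  have hkey : Ip = P ∨ Ip = P * P := by
    obtain ⟨C, hC⟩ := hPd
    by_cases hCtop : C = ⊤
    · left; rw [hC, hCtop, Ideal.mul_top]
    · right
      have hCbot : C ≠ ⊥ := by
        intro h
        rw [h, Ideal.mul_bot] at hC
        exact (Ideal.span_singleton_eq_bot.mp (hIp ▸ hC)) |> hp0
      obtain ⟨Q, hQmax, hQle⟩ := Ideal.exists_le_maximal C hCtop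
      have hQd : Q ∣ C := Ideal.dvd_iff_le.mpr hQle
      obtain ⟨D, hD⟩ := hQd
      have hnorm : Ideal.absNorm P * (Ideal.absNorm Q * Ideal.absNorm D) = p ^ 2 := by
        rw [← _root_.map_mul, ← _root_.map_mul, ← hD, ← hC, hIpnorm]
      have hPn : p ∣ Ideal.absNorm P :=
        hdiv _ ⟨_, hnorm.symm⟩ (by simpa [Ideal.absNorm_eq_one_iff] using hP.ne_top)
      have hQn : p ∣ Ideal.absNorm Q := by
        refine hdiv _ ⟨Ideal.absNorm P * Ideal.absNorm D, ?_⟩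
          (by simpa [Ideal.absNorm_eq_one_iff] using hQmax.ne_top)
        rw [← hnorm]; ring
      have hDn : Ideal.absNorm D = 1 := by
        obtain ⟨a, ha⟩ := hPn
        obtain ⟨b, hb⟩ := hQn
        rw [ha, hb] at hnorm
        have h1 : p ^ 2 * (a * (b * Ideal.absNorm D)) = p ^ 2 * 1 := by
          conv_rhs => rw [mul_one, ← hnorm]
          ring
        have h2 : a * (b * Ideal.absNorm D) = 1 :=
          Nat.eq_of_mul_eq_mul_left (pow_pos hp.pos 2) h1
        exact Nat.dvd_one.mp ⟨a * b, by rw [← h2]; ring⟩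
      have hDtop : D = ⊤ := Ideal.absNorm_eq_one_iff.mp hDn
      have hPQ : Ip = P * Q := by rw [hC, hD, hDtop, Ideal.mul_top]
      by_cases hPQeq : P = Q
      · rw [hPQ, hPQeq]
      · exact absurd ⟨P, Q, hP, hQmax.isPrime, hPQeq, hPQ⟩ hns
  have hP'd : P' ∣ Ip := Ideal.dvd_iff_le.mpr ((Ideal.span_singleton_le_iff_mem _).2 hmem')
  have hP'prime : Prime P' := (Ideal.prime_iff_isPrime hP'bot).mpr hP'
  have hP'P : P' ∣ P := by
    rcases hkey with h | h
    · rwa [h] at hP'd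
    · rw [h] at hP'd
      exact (hP'prime.2.2 _ _ hP'd).elim id id
  exact ((hP.isMaximal hPbot).eq_of_le hP'.ne_top (Ideal.dvd_iff_le.mp hP'P))

theorem eq_of_absNorm_eq (hdeg : Module.finrank ℚ K = 2) :
    ∀ n : ℕ, ∀ I J : Ideal (𝓞 K), I ≠ ⊥ → J ≠ ⊥ →
      Ideal.absNorm I = n → Ideal.absNorm J = n →
      (∀ p : ℕ, p.Prime → p ∣ n →
        ¬ ∃ P Q : Ideal (𝓞 K), P.IsPrime ∧ Q.IsPrime ∧ P ≠ Q ∧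
          Ideal.span {(p : 𝓞 K)} = P * Q) →
      I = J := by
  intro n
  induction n using Nat.strong_induction_on with
  | _ n ih =>
    intro I J hI hJ hIn hJn hns
    by_cases h1 : n = 1
    · rw [h1, Ideal.absNorm_eq_one_iff] at hIn hJn
      rw [hIn, hJn]
    · obtain ⟨p, hp, hpd⟩ := Nat.exists_prime_and_dvd h1
      obtain ⟨P, hPpr, hPI, hPp⟩ := exists_prime_over K hdeg hp I hI (hIn ▸ hpd)
      obtain ⟨P', hP'pr, hP'J, hP'p⟩ := exists_prime_over K hdeg hp J hJ (hJn ▸ hpd)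
      have hPP' : P = P' := unique_prime_over K hdeg hp (hns p hp hpd) hPpr hP'pr hPp hP'p
      obtain ⟨I2, hI2⟩ := Ideal.dvd_iff_le.mpr hPI
      obtain ⟨J2, hJ2⟩ := Ideal.dvd_iff_le.mpr (hPP' ▸ hP'J)
      have hPbot : P ≠ ⊥ := fun h => (Nat.cast_ne_zero.mpr hp.ne_zero : (p : 𝓞 K) ≠ 0)
        (by simpa [h] using hPp)
      have hI2bot : I2 ≠ ⊥ := fun h => hI (by rw [hI2, h, Ideal.mul_bot])
      have hJ2bot : J2 ≠ ⊥ := fun h => hJ (by rw [hJ2, h, Ideal.mul_bot])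
      have habsI : Ideal.absNorm P * Ideal.absNorm I2 = n := by
        rw [← _root_.map_mul, ← hI2, hIn]
      have habsJ : Ideal.absNorm P * Ideal.absNorm J2 = n := by
        rw [← _root_.map_mul, ← hJ2, hJn]
      have hPpos : 0 < Ideal.absNorm P :=
        Nat.pos_of_ne_zero (by simpa [Ideal.absNorm_eq_zero_iff] using hPbot)
      have hm : Ideal.absNorm J2 = Ideal.absNorm I2 :=
        Nat.eq_of_mul_eq_mul_left hPpos (habsJ.trans habsI.symm)
      have hP1 : 1 < Ideal.absNorm P := by
        have hne1 : Ideal.absNorm P ≠ 1 := fun h =>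
          hPpr.ne_top (Ideal.absNorm_eq_one_iff.mp h)
        omega
      have hmpos : 0 < Ideal.absNorm I2 :=
        Nat.pos_of_ne_zero (by simpa [Ideal.absNorm_eq_zero_iff] using hI2bot)
      have hmn : Ideal.absNorm I2 < n := by
        rw [← habsI]
        calc Ideal.absNorm I2 = 1 * Ideal.absNorm I2 := (one_mul _).symm
        _ < Ideal.absNorm P * Ideal.absNorm I2 := by
            exact (Nat.mul_lt_mul_right hmpos).mpr hP1
      have heq : I2 = J2 := by
        refine ih _ hmn I2 J2 hI2bot hJ2bot rfl hm ?_
        intro q hq hqd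
        exact hns q hq (hqd.trans ⟨Ideal.absNorm P, by rw [← habsI]; ring⟩)
      rw [hI2, hJ2, heq]

theorem norm_nonneg_of_imag (hdeg : Module.finrank ℚ K = 2)
    (himag : ∀ v : InfinitePlace K, v.IsComplex) (x : 𝓞 K) :
    0 ≤ Algebra.norm ℤ x := by
  classical
  have hcard : Fintype.card (K →+* ℂ) = 2 := by
    rw [NumberField.Embeddings.card K ℂ, hdeg]
  have hnon : Nonempty (K →+* ℂ) := Fintype.card_pos_iff.mp (by omega)
  obtain ⟨φ⟩ := hnon
  set ψ := NumberField.ComplexEmbedding.conjugate φ with hψ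
  have hne : φ ≠ ψ := by
    intro h
    exact (InfinitePlace.isComplex_mk_iff.mp (himag (InfinitePlace.mk φ)))
      (ComplexEmbedding.isReal_iff.mpr h.symm)
  have huniv : (Finset.univ : Finset (K →+* ℂ)) = {φ, ψ} := by
    refine (Finset.eq_of_subset_of_card_le (Finset.subset_univ _) ?_).symm
    rw [Finset.card_univ, hcard, Finset.card_pair hne]
  have hprod : algebraMap ℚ ℂ (Algebra.norm ℚ (x : K)) = φ (x : K) * ψ (x : K) := by
    rw [Algebra.norm_eq_prod_embeddings,
      ← Fintype.prod_equiv (RingHom.equivRatAlgHom K ℂ) (fun σ => σ (x : K))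
        (fun σ : K →ₐ[ℚ] ℂ => σ (x : K)) (fun _ => rfl),
      huniv, Finset.prod_pair hne]
  rw [hψ, ComplexEmbedding.conjugate_coe_eq, Complex.mul_conj] at hprod
  have hratC : ((Algebra.norm ℚ (x : K) : ℝ) : ℂ) = (Complex.normSq (φ (x : K)) : ℂ) := by
    rw [← hprod]
    simp [Complex.ofReal_ratCast]
  have hrat : (Algebra.norm ℚ (x : K) : ℝ) = Complex.normSq (φ (x : K)) :=
    Complex.ofReal_inj.mp hratC
  have h0 : 0 ≤ Algebra.norm ℚ (x : K) := by
    have := Complex.normSq_nonneg (φ (x : K))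
    rw [← hrat] at this
    exact_mod_cast this
  rw [← Algebra.coe_norm_int] at h0
  exact_mod_cast h0

theorem prime_ideal_principal [UniqueFactorizationMonoid (𝓞 K)]
    {P : Ideal (𝓞 K)} (hP : P.IsPrime) (hbot : P ≠ ⊥) :
    ∃ π : 𝓞 K, Prime π ∧ P = Ideal.span {π} := by
  obtain ⟨x, hxP, hx0⟩ := Submodule.exists_mem_ne_zero_of_ne_bot hbot
  obtain ⟨f, hfp, hfx⟩ := UniqueFactorizationMonoid.exists_prime_factors x hx0
  obtain ⟨u, hu⟩ := hfx
  have hfP : f.prod ∈ P := by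
    have : f.prod = x * (u⁻¹ : (𝓞 K)ˣ) := by
      rw [← hu, mul_assoc, Units.mul_inv, mul_one]
    rw [this]
    exact Ideal.mul_mem_right _ _ hxP
  obtain ⟨π, hπf, hπP⟩ := (hP.multiset_prod_mem_iff_exists_mem f).mp hfP
  have hπ : Prime π := hfp π hπf
  have hsp : (Ideal.span {π} : Ideal (𝓞 K)).IsPrime :=
    (Ideal.span_singleton_prime hπ.ne_zero).mpr hπ
  have hle : Ideal.span {π} ≤ P := (Ideal.span_singleton_le_iff_mem _).2 hπP
  have hmax : (Ideal.span {π} : Ideal (𝓞 K)).IsMaximal :=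
    hsp.isMaximal (by rw [Ne, Ideal.span_singleton_eq_bot]; exact hπ.ne_zero)
  exact ⟨π, hπ, (hmax.eq_of_le hP.ne_top hle).symm⟩

theorem isolated_norm_iff_no_split_prime_dvd'
    (hdeg : Module.finrank ℚ K = 2)
    (himag : ∀ v : InfinitePlace K, v.IsComplex)
    [UniqueFactorizationMonoid (𝓞 K)]
    (α : 𝓞 K) (hα : α ≠ 0) :
    (∀ β : 𝓞 K, Algebra.norm ℤ β = Algebra.norm ℤ α → Associated α β) ↔
      ¬ ∃ p : ℕ, p.Prime ∧
        (∃ P Q : Ideal (𝓞 K), P.IsPrime ∧ Q.IsPrime ∧ P ≠ Q ∧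
          Ideal.span {(p : 𝓞 K)} = P * Q) ∧
        (p : ℤ) ∣ Algebra.norm ℤ α := by
  have hspanα : Ideal.span {α} ≠ (⊥ : Ideal (𝓞 K)) := by
    rwa [Ne, Ideal.span_singleton_eq_bot]
  constructor
  · rintro hall ⟨p, hp, ⟨P, Q, hPpr, hQpr, hPQne, hfact⟩, hdvd⟩
    have hp0 : (p : 𝓞 K) ≠ 0 := Nat.cast_ne_zero.mpr hp.ne_zero
    have hPbot : P ≠ ⊥ := by
      intro h
      rw [h, Ideal.bot_mul] at hfact
      exact hp0 (Ideal.span_singleton_eq_bot.mp hfact)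
    have hQbot : Q ≠ ⊥ := by
      intro h
      rw [h, Ideal.mul_bot] at hfact
      exact hp0 (Ideal.span_singleton_eq_bot.mp hfact)
    obtain ⟨π, hπ, hPspan⟩ := prime_ideal_principal K hPpr hPbot
    obtain ⟨ρ, hρ, hQspan⟩ := prime_ideal_principal K hQpr hQbot
    -- absNorm P = absNorm Q = p
    have hnorm2 : Ideal.absNorm P * Ideal.absNorm Q = p ^ 2 := by
      rw [← _root_.map_mul, ← hfact, absNorm_span_nat K hdeg]
    have hdivP : p ∣ Ideal.absNorm P := by
      obtain ⟨i, hi, he⟩ := (Nat.dvd_prime_pow hp).mp (⟨_, hnorm2.symm⟩ : Ideal.absNorm P ∣ p ^ 2)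
      cases i with
      | zero =>
        exact absurd (Ideal.absNorm_eq_one_iff.mp (by simpa using he)) hPpr.ne_top
      | succ j => exact he ▸ dvd_pow_self p (Nat.succ_ne_zero j)
    have hdivQ : p ∣ Ideal.absNorm Q := by
      obtain ⟨i, hi, he⟩ := (Nat.dvd_prime_pow hp).mp
        (⟨_, by rw [← hnorm2]; ring⟩ : Ideal.absNorm Q ∣ p ^ 2)
      cases i with
      | zero =>
        exact absurd (Ideal.absNorm_eq_one_iff.mp (by simpa using he)) hQpr.ne_top
      | succ j => exact he ▸ dvd_pow_self p (Nat.succ_ne_zero j)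
    have hPp : Ideal.absNorm P = p ∧ Ideal.absNorm Q = p := by
      obtain ⟨a, ha⟩ := hdivP
      obtain ⟨b, hb⟩ := hdivQ
      rw [ha, hb] at hnorm2
      have h1 : p ^ 2 * (a * b) = p ^ 2 * 1 := by
        conv_rhs => rw [mul_one, ← hnorm2]
        ring
      have h2 : a * b = 1 := Nat.eq_of_mul_eq_mul_left (pow_pos hp.pos 2) h1
      constructor
      · rw [ha, Nat.eq_one_of_mul_eq_one_right h2, mul_one]
      · rw [hb, Nat.eq_one_of_mul_eq_one_left h2, mul_one]
    have hNπ : Algebra.norm ℤ π = (p : ℤ) := by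
      have h1 : (Algebra.norm ℤ π).natAbs = p := by
        rw [← Ideal.absNorm_span_singleton, ← hPspan, hPp.1]
      have h2 := norm_nonneg_of_imag K hdeg himag π
      omega
    have hNρ : Algebra.norm ℤ ρ = (p : ℤ) := by
      have h1 : (Algebra.norm ℤ ρ).natAbs = p := by
        rw [← Ideal.absNorm_span_singleton, ← hQspan, hPp.2]
      have h2 := norm_nonneg_of_imag K hdeg himag ρ
      omega
    -- some prime over p divides α
    have hdvdabs : p ∣ Ideal.absNorm (Ideal.span {α}) := by
      rw [Ideal.absNorm_span_singleton]
      have := Int.natAbs_dvd_natAbs.mpr hdvd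
      simpa using this
    obtain ⟨M, hMpr, hMα, hMp⟩ := exists_prime_over K hdeg hp _ hspanα hdvdabs
    have hMbot : M ≠ ⊥ := fun h => hp0 (by simpa [h] using hMp)
    have hMprime : Prime M := (Ideal.prime_iff_isPrime hMbot).mpr hMpr
    have hMdvd : M ∣ P * Q := by
      rw [← hfact]
      exact Ideal.dvd_iff_le.mpr ((Ideal.span_singleton_le_iff_mem _).2 hMp)
    -- key argument
    have key : ∀ π' ρ' : 𝓞 K, Prime π' → Prime ρ' →
        Ideal.span {π'} ≠ (Ideal.span {ρ'} : Ideal (𝓞 K)) →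
        Algebra.norm ℤ π' = Algebra.norm ℤ ρ' → π' ∣ α → False := by
      rintro π' ρ' hπ' hρ' hne hNeq ⟨γ, hγ⟩
      have hγ0 : γ ≠ 0 := by rintro rfl; rw [mul_zero] at hγ; exact hα hγ
      have hNβ : Algebra.norm ℤ (ρ' * γ) = Algebra.norm ℤ α := by
        rw [hγ, _root_.map_mul, _root_.map_mul, hNeq]
      have hassoc : Associated (π' * γ) (ρ' * γ) := by
        rw [← hγ]; exact hall _ hNβ
      have : Associated π' ρ' := by
        have h1 : Associated (γ * π') (γ * ρ') := by
          rwa [mul_comm γ π', mul_comm γ ρ']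
        exact Associated.of_mul_left h1 (Associated.refl γ) hγ0
      exact hne (Ideal.span_singleton_eq_span_singleton.mpr this)
    have hMP_or : M ∣ P ∨ M ∣ Q := (hMprime.2.2 P Q hMdvd)
    have hπα_or : π ∣ α ∨ ρ ∣ α := by
      rcases hMP_or with h | h
      · left
        have : M = P := ((hPpr.isMaximal hPbot).eq_of_le hMpr.ne_top (Ideal.dvd_iff_le.mp h)).symm
        rw [← Ideal.mem_span_singleton, ← hPspan, ← this]
        exact hMα (Ideal.subset_span rfl)
      · right
        have : M = Q := ((hQpr.isMaximal hQbot).eq_of_le hMpr.ne_top (Ideal.dvd_iff_le.mp h)).symm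
        rw [← Ideal.mem_span_singleton, ← hQspan, ← this]
        exact hMα (Ideal.subset_span rfl)
    have hspanne : Ideal.span {π} ≠ (Ideal.span {ρ} : Ideal (𝓞 K)) := by
      rw [← hPspan, ← hQspan]; exact hPQne
    rcases hπα_or with h | h
    · exact key π ρ hπ hρ hspanne (hNπ.trans hNρ.symm) h
    · exact key ρ π hρ hπ hspanne.symm (hNρ.trans hNπ.symm) h
  · intro hns β hNeq
    have habs : Ideal.absNorm (Ideal.span {β}) = Ideal.absNorm (Ideal.span {α}) := by
      rw [Ideal.absNorm_span_singleton, Ideal.absNorm_span_singleton, hNeq]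
    have hβ0 : Ideal.span {β} ≠ (⊥ : Ideal (𝓞 K)) := by
      intro h
      rw [h] at habs
      exact hspanα (Ideal.absNorm_eq_zero_iff.mp (by simpa using habs.symm))
    have heq : Ideal.span {α} = Ideal.span {β} := by
      refine eq_of_absNorm_eq K hdeg (Ideal.absNorm (Ideal.span {α})) _ _ hspanα hβ0 rfl habs ?_
      intro p hp hpd hsplit
      refine hns ⟨p, hp, hsplit, ?_⟩
      rw [Ideal.absNorm_span_singleton] at hpd
      exact Int.dvd_natAbs.mp (Int.natCast_dvd_natCast.mpr hpd)
    exact Ideal.span_singleton_eq_span_singleton.mp heq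

end Helpers


open NumberField

/-- Let `𝓞 K` be the ring of integers of an imaginary quadratic field which is a UFD. A
nonzero element `α ∈ 𝓞 K` has the property that every element of the same norm is an
associate of `α` if and only if no split rational prime divides `N(α)`. -/
theorem isolated_norm_iff_no_split_prime_dvd
    (K : Type*) [Field K] [NumberField K]
    (hdeg : Module.finrank ℚ K = 2)
    (himag : ∀ v : InfinitePlace K, v.IsComplex)
    [UniqueFactorizationMonoid (𝓞 K)]
    (α : 𝓞 K) (hα : α ≠ 0) :
    (∀ β : 𝓞 K, Algebra.norm ℤ β = Algebra.norm ℤ α → Associated α β) ↔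
      ¬ ∃ p : ℕ, p.Prime ∧
        (∃ P Q : Ideal (𝓞 K), P.IsPrime ∧ Q.IsPrime ∧ P ≠ Q ∧
          Ideal.span {(p : 𝓞 K)} = P * Q) ∧
        (p : ℤ) ∣ Algebra.norm ℤ α := by
  exact isolated_norm_iff_no_split_prime_dvd' K hdeg himag α hα
end

section
/- Let a₁, a₂, a₃ ∈ ℝ² be the three nearest-neighbor vectors of the honeycomb lattice with a₁ + a₂ + a₃ = 0 and |aᵢ| = 1. Then the function (h₁, h₂)(k) = (Σᵢ cos(k·aᵢ), Σᵢ sin(k·aᵢ)) vanishes exactly at the two Dirac points K and K' = −K in the Brillouin zone torus, where K = (4π/(3√3), 0) in the standard coordinates with a₁ = (0,1), a₂ = (√3/2, −1/2), a₃ = (−√3/2, −1/2). -/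
/-!
With `θ = k·(a₂ - a₁)` and `ψ = k·(a₃ - a₁)` we have
`Σᵢ e^{i k·aᵢ} = e^{i k·a₁} (1 + e^{iθ} + e^{iψ})`, and three unit vectors sum to zero exactly
when they form an equilateral triangle: `(θ, ψ) ≡ ±(2π/3, -2π/3) (mod 2π)`. Since
`K·(a₂ - a₁) = 2π/3 = -K·(a₃ - a₁)`, these are precisely the phases of `±K + Λ*`, and `K + K ∉ Λ*`
because `4π/3 ∉ 2πℤ`.
-/

open Real

theorem Real.cos_two_pi_div_three : cos (2 * π / 3) = -(1 / 2) := by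
  rw [show 2 * π / 3 = π - π / 3 by ring, cos_pi_sub, cos_pi_div_three]

theorem Real.sin_two_pi_div_three : sin (2 * π / 3) = √3 / 2 := by
  rw [show 2 * π / 3 = π - π / 3 by ring, sin_pi_sub, sin_pi_div_three]

namespace Real.Angle

theorem cos_sin_sum_add_left_eq_zero_iff (φ θ ψ : Angle) :
    (cos φ + cos (φ + θ) + cos (φ + ψ) = 0 ∧ sin φ + sin (φ + θ) + sin (φ + ψ) = 0) ↔
      (1 + cos θ + cos ψ = 0 ∧ sin θ + sin ψ = 0) := by
  simp only [cos_add, sin_add]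
  have hφ := cos_sq_add_sin_sq φ
  constructor
  · rintro ⟨hc, hs⟩
    constructor
    · linear_combination cos φ * hc + sin φ * hs - (1 + cos θ + cos ψ) * hφ
    · linear_combination -sin φ * hc + cos φ * hs - (sin θ + sin ψ) * hφ
  · rintro ⟨hc, hs⟩
    constructor
    · linear_combination cos φ * hc - sin φ * hs
    · linear_combination sin φ * hc + cos φ * hs

theorem one_add_cos_add_cos_eq_zero_iff (θ ψ : Angle) :
    (1 + cos θ + cos ψ = 0 ∧ sin θ + sin ψ = 0) ↔
      (θ = ↑(2 * π / 3) ∧ ψ = -↑(2 * π / 3)) ∨ (θ = -↑(2 * π / 3) ∧ ψ = ↑(2 * π / 3)) := by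
  have hsin : sin ↑(2 * π / 3) ≠ 0 := by
    rw [sin_coe, sin_two_pi_div_three]
    positivity
  constructor
  · rintro ⟨hc, hs⟩
    have hθ := cos_sq_add_sin_sq θ
    have hψ := cos_sq_add_sin_sq ψ
    -- `|1 + e^{iθ}| = |e^{iψ}| = 1`
    have hcθ : cos θ = -(1 / 2) := by
      linear_combination (1 + cos θ - cos ψ) / 2 * hc + (sin θ - sin ψ) / 2 * hs + hψ / 2 - hθ / 2
    have hcψ : cos ψ = -(1 / 2) := by linear_combination hc - hcθ
    have hc₀ : cos ↑(2 * π / 3) = -(1 / 2) := by rw [cos_coe, cos_two_pi_div_three]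
    rcases cos_eq_iff_eq_or_eq_neg.1 (hcθ.trans hc₀.symm) with rfl | rfl <;>
      rcases cos_eq_iff_eq_or_eq_neg.1 (hcψ.trans hc₀.symm) with rfl | rfl
    · exact absurd (by linear_combination hs / 2) hsin
    · exact .inl ⟨rfl, rfl⟩
    · exact .inr ⟨rfl, rfl⟩
    · rw [sin_neg] at hs
      exact absurd (by linear_combination -hs / 2) hsin
  · rintro (⟨rfl, rfl⟩ | ⟨rfl, rfl⟩) <;>
      simp only [cos_neg, sin_neg, cos_coe, cos_two_pi_div_three] <;> norm_num

end Real.Angle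

section ReciprocalLattice

variable {E : Type*} [AddCommGroup E] [Module ℝ E] (B : LinearMap.BilinForm ℝ E)

def reciprocalLattice (b₁ b₂ : E) : Set E :=
  {g | (∃ m : ℤ, B g b₁ = 2 * π * m) ∧ (∃ m : ℤ, B g b₂ = 2 * π * m)}

theorem exists_mem_reciprocalLattice_eq_add_iff (b₁ b₂ k K : E) :
    (∃ g ∈ reciprocalLattice B b₁ b₂, k = K + g) ↔
      ((B k b₁ : Angle) = B K b₁ ∧ (B k b₂ : Angle) = B K b₂) := by
  simp only [Angle.angle_eq_iff_two_pi_dvd_sub, ← LinearMap.map_sub₂]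
  constructor
  · rintro ⟨g, hg, rfl⟩
    rwa [add_sub_cancel_left]
  · exact fun h ↦ ⟨k - K, h, (add_sub_cancel K k).symm⟩

theorem add_self_notMem_reciprocalLattice {b₁ K : E} (hK : B K b₁ = 2 * π / 3) (b₂ : E) :
    K + K ∉ reciprocalLattice B b₁ b₂ := by
  rintro ⟨⟨m, hm⟩, -⟩
  rw [LinearMap.map_add₂, hK] at hm
  have h3m : ((3 * m : ℤ) : ℝ) = 2 := by
    push_cast
    exact mul_right_cancel₀ pi_ne_zero (by linear_combination -(3 / 2) * hm)
  have : 3 * m = 2 := by exact_mod_cast h3m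
  omega

theorem cos_sin_sum_eq_zero_iff_exists_mem_reciprocalLattice {a₁ a₂ a₃ K : E}
    (hK₂ : B K (a₂ - a₁) = 2 * π / 3) (hK₃ : B K (a₃ - a₁) = -(2 * π / 3)) (k : E) :
    (cos (B k a₁) + cos (B k a₂) + cos (B k a₃) = 0 ∧
        sin (B k a₁) + sin (B k a₂) + sin (B k a₃) = 0) ↔
      ∃ g ∈ reciprocalLattice B (a₂ - a₁) (a₃ - a₁), k = K + g ∨ k = -K + g := by
  have hphase (a : E) : (B k a : Angle) = ↑(B k a₁) + ↑(B k (a - a₁)) := by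
    rw [← Angle.coe_add, map_sub, add_sub_cancel]
  simp only [← Angle.cos_coe, ← Angle.sin_coe, hphase a₂, hphase a₃,
    Angle.cos_sin_sum_add_left_eq_zero_iff, Angle.one_add_cos_add_cos_eq_zero_iff, and_or_left,
    exists_or, exists_mem_reciprocalLattice_eq_add_iff, LinearMap.map_neg₂, hK₂, hK₃,
    Angle.coe_neg, neg_neg]

end ReciprocalLattice

/-- For the honeycomb lattice with nearest-neighbor vectors `a₁ = (0,1)`,
`a₂ = (√3/2, -1/2)`, `a₃ = (-√3/2, -1/2)` (so `a₁ + a₂ + a₃ = 0`, `|aᵢ| = 1`), the function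
`(h₁,h₂)(k) = (Σᵢ cos(k·aᵢ), Σᵢ sin(k·aᵢ))` vanishes exactly at the two Dirac points
`K = (4π/(3√3), 0)` and `K' = -K`, modulo the reciprocal lattice `Λ*` of the triangular
Bravais lattice spanned by `a₂ - a₁` and `a₃ - a₁`; moreover `K` and `K'` are distinct
points of the Brillouin-zone torus, i.e. `K - K' = 2K ∉ Λ*`. -/
theorem honeycomb_dirac_points
    (a₁ a₂ a₃ : ℝ × ℝ)
    (ha₁ : a₁ = (0, 1)) (ha₂ : a₂ = (Real.sqrt 3 / 2, -(1 / 2)))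
    (ha₃ : a₃ = (-(Real.sqrt 3) / 2, -(1 / 2)))
    (K : ℝ × ℝ) (hK : K = (4 * π / (3 * Real.sqrt 3), 0))
    (dot : ℝ × ℝ → ℝ × ℝ → ℝ) (hdot : ∀ u v, dot u v = u.1 * v.1 + u.2 * v.2)
    (Λstar : Set (ℝ × ℝ))
    (hΛ : Λstar = {g | (∃ m : ℤ, dot g (a₂ - a₁) = 2 * π * m) ∧
                       (∃ m : ℤ, dot g (a₃ - a₁) = 2 * π * m)}) :
    (∀ k : ℝ × ℝ,
      (Real.cos (dot k a₁) + Real.cos (dot k a₂) + Real.cos (dot k a₃) = 0 ∧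
       Real.sin (dot k a₁) + Real.sin (dot k a₂) + Real.sin (dot k a₃) = 0) ↔
      (∃ g ∈ Λstar, k = K + g ∨ k = -K + g)) ∧
    K + K ∉ Λstar := by
  let B : LinearMap.BilinForm ℝ (ℝ × ℝ) := by
    refine LinearMap.mk₂ ℝ dot ?_ ?_ ?_ ?_ <;> intros <;>
      simp only [hdot, Prod.fst_add, Prod.snd_add, Prod.smul_fst, Prod.smul_snd, smul_eq_mul] <;>
      ring
  have h3 : √3 ≠ 0 := by positivity
  have hK₂ : B K (a₂ - a₁) = 2 * π / 3 := by
    simp only [B, LinearMap.mk₂_apply, hdot, hK, Prod.fst_sub, Prod.snd_sub, ha₁, ha₂]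
    field_simp
    ring
  have hK₃ : B K (a₃ - a₁) = -(2 * π / 3) := by
    simp only [B, LinearMap.mk₂_apply, hdot, hK, Prod.fst_sub, Prod.snd_sub, ha₁, ha₃]
    field_simp
    ring
  subst hΛ
  exact ⟨cos_sin_sum_eq_zero_iff_exists_mem_reciprocalLattice B hK₂ hK₃,
    add_self_notMem_reciprocalLattice B hK₂ _⟩
end
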